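/- arXiv:2212.09960 — 6 statements merged into one kernel-verified Lean document; each statement's English description precedes it below -/
import Mathlib

section
/- Let X ⊆ ℤ^n be a finite c_1-connected set, equipped with the Euclidean metric d, and let T: X → X be a weakly uniformly strict contraction, i.e., for every ε > 0 there exists δ > 0 such that ε ≤ d(x,y) < ε + δ implies d(Tx,Ty) < ε for all x,y ∈ X. Then T is a constant function. -/
open Filter Topology

/-- Points of ℤ^n are c₁-adjacent if they differ by exactly 1 in exactly one
coordinate and agree in all other coordinates. -/
def C1Adj {n : ℕ} (x y : Fin n → ℤ) : Prop :=
  ∃ i, (x i - y i).natAbs = 1 ∧ ∀ j, j ≠ i → x j = y j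

/-- A subset of ℤ^n is c₁-connected if any two of its points are joined by a
path in the set whose consecutive points are c₁-adjacent. -/
def C1Connected {n : ℕ} (X : Set (Fin n → ℤ)) : Prop :=
  ∀ x ∈ X, ∀ y ∈ X,
    Relation.ReflTransGen (fun a b => a ∈ X ∧ b ∈ X ∧ C1Adj a b) x y

/-- The Euclidean metric on ℤ^n. -/
noncomputable def euclDist {n : ℕ} (x y : Fin n → ℤ) : ℝ :=
  Real.sqrt (∑ i, ((x i : ℝ) - (y i : ℝ)) ^ 2)

/-! Any two distinct lattice points are at distance at least 1, and adjacent ones at distance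
exactly 1. So a weakly uniformly strict contraction, applied with `ε = 1`, sends adjacent points
to points at distance `< 1`, that is, to the same point; along c₁-paths it is then constant. -/

section

variable {n : ℕ}

theorem one_le_euclDist_of_ne {x y : Fin n → ℤ} (h : x ≠ y) : 1 ≤ euclDist x y := by
  obtain ⟨i, hi⟩ := Function.ne_iff.mp h
  have hi_sq : (1 : ℤ) ≤ (x i - y i) ^ 2 := by
    rw [← sq_abs]
    exact one_le_pow₀ (Int.one_le_abs (sub_ne_zero.mpr hi))
  rw [euclDist, Real.one_le_sqrt]
  calc (1 : ℝ) ≤ ((x i : ℝ) - y i) ^ 2 := by exact_mod_cast hi_sq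
    _ ≤ ∑ j, ((x j : ℝ) - y j) ^ 2 :=
      Finset.single_le_sum (f := fun j => ((x j : ℝ) - y j) ^ 2) (fun j _ => sq_nonneg _)
        (Finset.mem_univ i)

theorem C1Adj.euclDist_eq_one {x y : Fin n → ℤ} (h : C1Adj x y) : euclDist x y = 1 := by
  obtain ⟨i, hi, hother⟩ := h
  have hi_sq : (x i - y i) ^ 2 = 1 := by
    rw [← Int.natAbs_pow_two, hi]
    rfl
  rw [euclDist, Finset.sum_eq_single i, Real.sqrt_eq_one]
  · exact_mod_cast hi_sq
  · intro j _ hj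
    rw [hother j hj, sub_self, sq, mul_zero]
  · exact fun hi => absurd (Finset.mem_univ i) hi

theorem C1Connected.eq_of_forall_c1Adj {α : Type*} {X : Set (Fin n → ℤ)} (hX : C1Connected X)
    {f : (Fin n → ℤ) → α} (hf : ∀ a ∈ X, ∀ b ∈ X, C1Adj a b → f a = f b) :
    ∀ x ∈ X, ∀ y ∈ X, f x = f y := by
  intro x hx y hy
  induction hX x hx y hy with
  | refl => rfl
  | tail _ hbc ih => exact (ih hbc.1).trans (hf _ hbc.1 _ hbc.2.1 hbc.2.2)

end

theorem constant_of_weakly_uniformly_strict_on_c1_connected_general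
    {n : ℕ} (X : Set (Fin n → ℤ)) (hconn : C1Connected X)
    (T : (Fin n → ℤ) → (Fin n → ℤ))
    (hwus : ∀ ε > (0 : ℝ), ∃ δ > (0 : ℝ), ∀ x ∈ X, ∀ y ∈ X,
      ε ≤ euclDist x y → euclDist x y < ε + δ → euclDist (T x) (T y) < ε) :
    ∀ x ∈ X, ∀ y ∈ X, T x = T y := by
  obtain ⟨δ, hδ, hcontr⟩ := hwus 1 one_pos
  refine hconn.eq_of_forall_c1Adj fun a ha b hb hab => ?_
  have hd := hab.euclDist_eq_one
  have hT : euclDist (T a) (T b) < 1 := hcontr a ha b hb hd.ge (by linarith)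
  by_contra hne
  exact hT.not_ge (one_le_euclDist_of_ne hne)

/-- A weakly uniformly strict contraction on a finite c₁-connected
subset of ℤ^n with the Euclidean metric is constant. -/
theorem constant_of_weakly_uniformly_strict_on_c1_connected
    {n : ℕ} (X : Set (Fin n → ℤ)) (hfin : X.Finite) (hconn : C1Connected X)
    (T : (Fin n → ℤ) → (Fin n → ℤ)) (hT : ∀ x ∈ X, T x ∈ X)
    (hwus : ∀ ε > (0 : ℝ), ∃ δ > (0 : ℝ), ∀ x ∈ X, ∀ y ∈ X,
      ε ≤ euclDist x y → euclDist x y < ε + δ → euclDist (T x) (T y) < ε) :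
    ∀ x ∈ X, ∀ y ∈ X, T x = T y :=
  constant_of_weakly_uniformly_strict_on_c1_connected_general X hconn T hwus
end

section
/- Let (X,d) be a nonempty finite metric space, let β: [0,∞) → [0,1), and let f: X → X satisfy d(f(x),f(y)) ≤ β(d(x,y))·d(x,y) for all x,y ∈ X. Then f is a contraction map, i.e., there exists k ∈ [0,1) such that d(f(x),f(y)) ≤ k·d(x,y) for all x,y ∈ X. -/
theorem Finite.exists_mem_Ico_forall_le {ι α : Type*} [Finite ι] [LinearOrder α] {a b : α}
    (hab : a < b) (g : ι → α) (hg : ∀ i, g i < b) : ∃ k ∈ Set.Ico a b, ∀ i, g i ≤ k := by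
  have : Nonempty (Set.Ico a b) := ⟨⟨a, le_rfl, hab⟩⟩
  obtain ⟨⟨k, hk⟩, hgk⟩ := Finite.exists_le fun i ↦
    (⟨max a (g i), le_max_left _ _, max_lt hab (hg i)⟩ : Set.Ico a b)
  exact ⟨k, hk, fun i ↦ (le_max_right _ _).trans (hgk i)⟩

theorem contraction_of_geraghty_on_finite_general
    {X : Type*} [MetricSpace X] [Finite X]
    (β : ℝ → ℝ) (hβ : ∀ t, 0 ≤ t → 0 ≤ β t ∧ β t < 1)
    (f : X → X)
    (hf : ∀ x y : X, dist (f x) (f y) ≤ β (dist x y) * dist x y) :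
    ∃ k : ℝ, 0 ≤ k ∧ k < 1 ∧ ∀ x y : X, dist (f x) (f y) ≤ k * dist x y := by
  obtain ⟨k, ⟨hk₀, hk₁⟩, hβk⟩ := Finite.exists_mem_Ico_forall_le zero_lt_one
    (fun p : X × X ↦ β (dist p.1 p.2)) fun p ↦ (hβ _ dist_nonneg).2
  exact ⟨k, hk₀, hk₁, fun x y ↦ (hf x y).trans <| by gcongr; exact hβk (x, y)⟩

/-- On a nonempty finite metric space, every digital Geraghty
contraction map is a contraction map. -/
theorem contraction_of_geraghty_on_finite
    {X : Type*} [MetricSpace X] [Finite X] [Nonempty X]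
    (β : ℝ → ℝ) (hβ : ∀ t, 0 ≤ t → 0 ≤ β t ∧ β t < 1)
    (f : X → X)
    (hf : ∀ x y : X, dist (f x) (f y) ≤ β (dist x y) * dist x y) :
    ∃ k : ℝ, 0 ≤ k ∧ k < 1 ∧ ∀ x y : X, dist (f x) (f y) ≤ k * dist x y :=
  contraction_of_geraghty_on_finite_general β hβ f hf
end

section
/- Let X ⊆ ℤ^n be c_1-connected, equipped with the Euclidean metric d. Let f: X → X be a digital Geraghty contraction map, i.e., there exists β: [0,∞) → [0,1) with d(f(x),f(y)) ≤ β(d(x,y))·d(x,y) for all x,y ∈ X. Then f is a constant function. -/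
open Filter Topology

/-! Distinct lattice points are at Euclidean distance at least 1, and c₁-adjacent ones at
distance exactly 1. A contraction therefore sends c₁-adjacent points to points at distance
`β 1 < 1`, i.e. to the same point, and c₁-connectedness propagates this along paths. -/

section

variable {n : ℕ}

theorem one_le_euclDist_of_ne_s10 {a b : Fin n → ℤ} (hne : a ≠ b) : 1 ≤ euclDist a b := by
  obtain ⟨i, hi⟩ := Function.ne_iff.mp hne
  have hsq : (1 : ℤ) ≤ (a i - b i) ^ 2 :=
    one_le_sq_iff_one_le_abs _ |>.mpr (Int.one_le_abs (sub_ne_zero.mpr hi))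
  have hsq' : (1 : ℝ) ≤ ((a i : ℝ) - b i) ^ 2 := by exact_mod_cast hsq
  rw [euclDist, Real.one_le_sqrt]
  exact hsq'.trans <| Finset.single_le_sum (fun j _ => sq_nonneg ((a j : ℝ) - b j))
    (Finset.mem_univ i)

theorem eq_of_euclDist_lt_one {a b : Fin n → ℤ} (h : euclDist a b < 1) : a = b := by
  by_contra hne
  exact (one_le_euclDist_of_ne_s10 hne).not_gt h

theorem C1Adj.euclDist_eq_one_s10 {a b : Fin n → ℤ} (hab : C1Adj a b) : euclDist a b = 1 := by
  obtain ⟨i, hi, hother⟩ := hab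
  have hsq : (a i - b i) ^ 2 = 1 := by rw [← Int.natAbs_sq, hi]; rfl
  have hsq' : ((a i : ℝ) - b i) ^ 2 = 1 := by exact_mod_cast hsq
  rw [euclDist, Finset.sum_eq_single i (fun j _ hj => by simp [hother j hj])
    (fun h => absurd (Finset.mem_univ i) h), hsq', Real.sqrt_one]

theorem C1Connected.eq_of_forall_adj {α : Type*} {X : Set (Fin n → ℤ)} (hX : C1Connected X)
    {g : (Fin n → ℤ) → α} (hg : ∀ a ∈ X, ∀ b ∈ X, C1Adj a b → g a = g b) :
    ∀ x ∈ X, ∀ y ∈ X, g x = g y := by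
  intro x hx y hy
  induction hX x hx y hy with
  | refl => rfl
  | tail _ hbc ih => exact (ih hbc.1).trans (hg _ hbc.1 _ hbc.2.1 hbc.2.2)

end

theorem geraghty_constant_on_c1_connected_general
    {n : ℕ} (X : Set (Fin n → ℤ)) (hconn : C1Connected X)
    (f : (Fin n → ℤ) → (Fin n → ℤ))
    (β : ℝ → ℝ) (hβ : ∀ t, 0 ≤ t → 0 ≤ β t ∧ β t < 1)
    (hcontr : ∀ x ∈ X, ∀ y ∈ X,
      euclDist (f x) (f y) ≤ β (euclDist x y) * euclDist x y) :
    ∀ x ∈ X, ∀ y ∈ X, f x = f y := by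
  refine hconn.eq_of_forall_adj fun a ha b hb hab => eq_of_euclDist_lt_one ?_
  calc euclDist (f a) (f b) ≤ β (euclDist a b) * euclDist a b := hcontr a ha b hb
    _ = β 1 := by rw [hab.euclDist_eq_one_s10, mul_one]
    _ < 1 := (hβ 1 zero_le_one).2

/-- A digital Geraghty contraction map on a c₁-connected subset of
ℤ^n with the Euclidean metric is constant. -/
theorem geraghty_constant_on_c1_connected
    {n : ℕ} (X : Set (Fin n → ℤ)) (hconn : C1Connected X)
    (f : (Fin n → ℤ) → (Fin n → ℤ)) (hf : ∀ x ∈ X, f x ∈ X)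
    (β : ℝ → ℝ) (hβ : ∀ t, 0 ≤ t → 0 ≤ β t ∧ β t < 1)
    (hcontr : ∀ x ∈ X, ∀ y ∈ X,
      euclDist (f x) (f y) ≤ β (euclDist x y) * euclDist x y) :
    ∀ x ∈ X, ∀ y ∈ X, f x = f y :=
  geraghty_constant_on_c1_connected_general X hconn f β hβ hcontr
end

section
/- Let X be a nonempty subset of ℤ^n equipped with the Euclidean metric d. Let β: [0,∞) → [0,1) be such that for every sequence (t_k) in [0,∞), if β(t_k) → 1 then t_k → 0. Let f: X → X satisfy d(f(x),f(y)) ≤ β(d(x,y))·d(x,y) for all x,y ∈ X. Then f has a unique fixed point in X. -/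
open Function

theorem exists_mem_isFixedPt_of_lt {α β : Type*} [LT β] [WellFoundedLT β] {X : Set α}
    (hX : X.Nonempty) {f : α → α} (hf : Set.MapsTo f X X) {φ : α → β}
    (hφ : ∀ x ∈ X, f x ≠ x → φ (f x) < φ x) : ∃ x ∈ X, IsFixedPt f x := by
  obtain ⟨_, ⟨x, hx, rfl⟩, hmin⟩ := wellFounded_lt.has_min (φ '' X) (hX.image φ)
  exact ⟨x, hx, by_contra fun hfx => hmin _ ⟨f x, hf hx, rfl⟩ (hφ x hx hfx)⟩

namespace euclDist

variable {n : ℕ}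

def sqNat (x y : Fin n → ℤ) : ℕ :=
  ∑ i, (x i - y i).natAbs ^ 2

theorem eq_sqrt_sqNat (x y : Fin n → ℤ) : euclDist x y = Real.sqrt (sqNat x y) := by
  simp only [euclDist, sqNat, Nat.cast_sum, Nat.cast_pow, Nat.cast_natAbs, Int.cast_abs,
    sq_abs, Int.cast_sub]

theorem lt_iff_sqNat_lt {x y x' y' : Fin n → ℤ} :
    euclDist x y < euclDist x' y' ↔ sqNat x y < sqNat x' y' := by
  rw [eq_sqrt_sqNat, eq_sqrt_sqNat, Real.sqrt_lt_sqrt_iff (Nat.cast_nonneg _), Nat.cast_lt]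

theorem sqNat_eq_zero_iff {x y : Fin n → ℤ} : sqNat x y = 0 ↔ x = y := by
  simp only [sqNat, Finset.sum_eq_zero_iff, Finset.mem_univ, true_implies,
    pow_eq_zero_iff two_ne_zero, Int.natAbs_eq_zero, sub_eq_zero, funext_iff]

theorem pos_of_ne {x y : Fin n → ℤ} (h : x ≠ y) : 0 < euclDist x y := by
  rw [eq_sqrt_sqNat, Real.sqrt_pos, Nat.cast_pos, Nat.pos_iff_ne_zero]
  exact mt sqNat_eq_zero_iff.mp h

end euclDist

theorem geraghty_unique_fixed_point_general
    {n : ℕ} (X : Set (Fin n → ℤ)) (hne : X.Nonempty)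
    (β : ℝ → ℝ) (hβ : ∀ t, 0 ≤ t → 0 ≤ β t ∧ β t < 1)
    (f : (Fin n → ℤ) → (Fin n → ℤ)) (hf : ∀ x ∈ X, f x ∈ X)
    (hcontr : ∀ x ∈ X, ∀ y ∈ X,
      euclDist (f x) (f y) ≤ β (euclDist x y) * euclDist x y) :
    ∃! u, u ∈ X ∧ f u = u := by
  have hlt : ∀ x ∈ X, ∀ y ∈ X, x ≠ y → euclDist (f x) (f y) < euclDist x y :=
    fun x hx y hy hxy => (hcontr x hx y hy).trans_lt <|
      mul_lt_of_lt_one_left (euclDist.pos_of_ne hxy) (hβ _ (Real.sqrt_nonneg _)).2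
  obtain ⟨u, hu, hfu⟩ :=
    exists_mem_isFixedPt_of_lt hne hf (φ := fun x => euclDist.sqNat x (f x))
      fun x hx hfx => euclDist.lt_iff_sqNat_lt.mp (hlt x hx (f x) (hf x hx) (Ne.symm hfx))
  refine ⟨u, ⟨hu, hfu⟩, fun v ⟨hv, hfv⟩ => by_contra fun hvu => ?_⟩
  exact (hlt v hv u hu hvu).ne (by rw [hfv, hfu])

/-- A digital Geraghty contraction map on a nonempty subset of ℤ^n
with the Euclidean metric has a unique fixed point. -/
theorem geraghty_unique_fixed_point
    {n : ℕ} (X : Set (Fin n → ℤ)) (hne : X.Nonempty)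
    (β : ℝ → ℝ) (hβ : ∀ t, 0 ≤ t → 0 ≤ β t ∧ β t < 1)
    (hG : ∀ t : ℕ → ℝ, (∀ k, 0 ≤ t k) →
      Filter.Tendsto (fun k => β (t k)) Filter.atTop (nhds 1) →
      Filter.Tendsto t Filter.atTop (nhds 0))
    (f : (Fin n → ℤ) → (Fin n → ℤ)) (hf : ∀ x ∈ X, f x ∈ X)
    (hcontr : ∀ x ∈ X, ∀ y ∈ X,
      euclDist (f x) (f y) ≤ β (euclDist x y) * euclDist x y) :
    ∃! u, u ∈ X ∧ f u = u :=
  geraghty_unique_fixed_point_general X hne β hβ f hf hcontr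
end

section
/- Let D = {(1,0), (0,1), (-1,0), (0,-1)} ⊆ ℤ² with the Euclidean metric d, let S be the identity map on D, and let T: D → D be given by T(x) = -x. Then for every α with 0 < α < 1/2 and all x,y ∈ D, d(S(x),T(y)) ≤ α·d(x,S(x)) + d(y,T(y)), yet T has no fixed point in D. (This refutes the claim that any self-maps S,T of a digital metric space satisfying d(Sx,Ty) ≤ α·d(x,Sx) + d(y,Ty) for all x,y and some 0 < α < 1/2 must have a unique common fixed point.) -/
open Filter Topology

/-- The Euclidean metric on ℤ². -/
noncomputable def euclDist2 (a b : ℤ × ℤ) : ℝ :=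
  Real.sqrt (((a.1 : ℝ) - (b.1 : ℝ)) ^ 2 + ((a.2 : ℝ) - (b.2 : ℝ)) ^ 2)

/-- The "diamond" in ℤ². -/
def Diamond : Set (ℤ × ℤ) :=
  {(1, 0), (0, 1), (-1, 0), (0, -1)}

/-!
With `S = id` the term `α · d(x, Sx)` vanishes, so the inequality reduces to `|x + y| ≤ |2y|`.
All points of the diamond lie on the unit circle, and for `|x| = |y|` the parallelogram law gives
`|2y|² - |x + y|² = |x - y|² ≥ 0`. Negation fixes only the origin, which is not on the diamond.
-/

theorem euclDist2_self (a : ℤ × ℤ) : euclDist2 a a = 0 := by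
  simp [euclDist2]

theorem euclDist2_neg_le_euclDist2_neg_self {a b : ℤ × ℤ}
    (h : a.1 ^ 2 + a.2 ^ 2 = b.1 ^ 2 + b.2 ^ 2) : euclDist2 a (-b) ≤ euclDist2 b (-b) := by
  have h' : (a.1 : ℝ) ^ 2 + (a.2 : ℝ) ^ 2 = (b.1 : ℝ) ^ 2 + (b.2 : ℝ) ^ 2 := by exact_mod_cast h
  unfold euclDist2
  apply Real.sqrt_le_sqrt
  push_cast [Prod.fst_neg, Prod.snd_neg]
  nlinarith [sq_nonneg ((a.1 : ℝ) - b.1), sq_nonneg ((a.2 : ℝ) - b.2)]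

theorem sq_add_sq_eq_one_of_mem_diamond {u : ℤ × ℤ} (hu : u ∈ Diamond) :
    u.1 ^ 2 + u.2 ^ 2 = 1 := by
  rcases hu with rfl | rfl | rfl | rfl <;> rfl

theorem neg_ne_self_of_mem_diamond {u : ℤ × ℤ} (hu : u ∈ Diamond) : -u ≠ u := by
  intro hneg
  have hzero : u.1 = 0 ∧ u.2 = 0 := by
    simp only [Prod.ext_iff, Prod.fst_neg, Prod.snd_neg] at hneg
    omega
  have hone := sq_add_sq_eq_one_of_mem_diamond hu
  rw [hzero.1, hzero.2] at hone
  norm_num at hone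

/-- On the diamond D with the Euclidean metric, S = id and
T x = -x satisfy d(Sx,Ty) ≤ α·d(x,Sx) + d(y,Ty) for every 0 < α < 1/2 and all
x, y ∈ D, yet T has no fixed point in D. -/
theorem diamond_counterexample :
    (∀ α : ℝ, 0 < α → α < 1 / 2 → ∀ x ∈ Diamond, ∀ y ∈ Diamond,
      euclDist2 (id x) (-y) ≤ α * euclDist2 x (id x) + euclDist2 y (-y)) ∧
      ¬∃ u ∈ Diamond, -u = u := by
  refine ⟨fun α _ _ x hx y hy => ?_, fun ⟨u, hu, hneg⟩ => neg_ne_self_of_mem_diamond hu hneg⟩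
  rw [id, euclDist2_self, mul_zero, zero_add]
  apply euclDist2_neg_le_euclDist2_neg_self
  rw [sq_add_sq_eq_one_of_mem_diamond hx, sq_add_sq_eq_one_of_mem_diamond hy]
end

section
/- Let S: ℤ → ℤ be given by S(x) = x + 1, with the metric d(x,y) = |x − y|. Then S is bijective, d(S(x),S(y)) = d(x,y) for all x,y ∈ ℤ (so with ψ(t) = t and α ≡ 1, S satisfies ψ(d(Sx,Sy)) ≥ α(x,y)·d(x,y)), S is c_1-continuous, and S has no fixed point. (This refutes the assertions that a bijective, continuous, digital α-ψ expansive mapping on a complete digital metric space with α-admissible inverse must have a fixed point.) -/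
/-- The map S(x) = x + 1 on ℤ with d(x,y) = |x - y| is bijective,
preserves distances (hence with ψ(t) = t and α ≡ 1 it is a digital α-ψ expansive
mapping), is c₁-continuous, yet has no fixed point. -/
theorem successor_is_expansive_without_fixed_point
    (S : ℤ → ℤ) (hS : ∀ x, S x = x + 1) :
    Function.Bijective S ∧
    (∀ x y : ℤ, dist (S x) (S y) = dist x y) ∧
    (∀ x y : ℤ, (fun t : ℝ => t) (dist (S x) (S y)) ≥
      (fun _ _ : ℤ => (1 : ℝ)) x y * dist x y) ∧
    (∀ x y : ℤ, (x - y).natAbs = 1 → (S x - S y).natAbs ≤ 1) ∧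
    (∀ x : ℤ, S x ≠ x) := by
  obtain rfl : S = (· + 1) := funext hS
  have isometry (x y : ℤ) : dist (x + 1) (y + 1) = dist x y := dist_add_right x y 1
  refine ⟨(Equiv.addRight 1).bijective, isometry,
    fun x y => (one_mul (dist x y)).trans_le (isometry x y).ge,
    fun x y h => ?_, fun x => (lt_add_one x).ne'⟩
  rw [add_sub_add_right_eq_sub, h]
end
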